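/- If mechanism error for analyst i is Err_i = (2/ε²)‖Wᵢ S⁺‖²_F and adding an analyst transforms the strategy S into DŜ where Ŝ = [S; C] (rows added) and D is diagonal with entries ≥ 1 (weights scaled up), while the per-query noise scale 1/ε is unchanged, then Err_i can only decrease or stay the same: (2/ε²)‖Wᵢ(D[S;C])⁺‖²_F ≤ (2/ε²)‖WᵢS⁺‖²_F. -/

import Mathlib

/-!
Write `A = D [S; C]` and `X = [Wᵢ S⁺, 0] D⁻¹`. Then `X A = Wᵢ S⁺ S = Wᵢ`, so `Wᵢ A⁺ = X (A A⁺)`.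
Since `A A⁺` is an orthogonal projection, right multiplication by it does not increase the
Frobenius norm; and since every diagonal entry of `D⁻¹` lies in `(0, 1]`, neither does right
multiplication by `D⁻¹`. Hence `‖Wᵢ A⁺‖_F ≤ ‖X‖_F ≤ ‖[Wᵢ S⁺, 0]‖_F = ‖Wᵢ S⁺‖_F`.
-/

open Matrix BigOperators

noncomputable def frob {m n : Type*} [Fintype m] [Fintype n] (M : Matrix m n ℝ) : ℝ :=
  Real.sqrt (∑ i, ∑ j, (M i j) ^ 2)

def IsMPInv {k n : Type*} [Fintype k] [Fintype n] (A : Matrix k n ℝ) (P : Matrix n k ℝ) : Prop :=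
  A * P * A = A ∧ P * A * P = P ∧ (A * P)ᵀ = A * P ∧ (P * A)ᵀ = P * A

section Frobenius

variable {m n p : Type*} [Fintype m] [Fintype n] [Fintype p]

lemma frob_nonneg (M : Matrix m n ℝ) : 0 ≤ frob M := Real.sqrt_nonneg _

lemma sum_sq_entries_nonneg (M : Matrix m n ℝ) : 0 ≤ ∑ i, ∑ j, (M i j) ^ 2 := by positivity

lemma frob_le_frob_of_sum_sq_le {M : Matrix m n ℝ} {N : Matrix m p ℝ}
    (h : ∑ i, ∑ j, (M i j) ^ 2 ≤ ∑ i, ∑ j, (N i j) ^ 2) : frob M ≤ frob N :=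
  Real.sqrt_le_sqrt h

lemma trace_mul_transpose_self (M : Matrix m n ℝ) :
    trace (M * Mᵀ) = ∑ i, ∑ j, (M i j) ^ 2 := by
  simp [trace, mul_apply, sq]

lemma frob_fromCols_zero (M : Matrix m n ℝ) : frob (fromCols M (0 : Matrix m p ℝ)) = frob M := by
  simp [frob, Fintype.sum_sum_type]

lemma frob_mul_diagonal_le [DecidableEq n] (M : Matrix m n ℝ) {e : n → ℝ}
    (he : ∀ j, |e j| ≤ 1) : frob (M * diagonal e) ≤ frob M := by
  refine frob_le_frob_of_sum_sq_le (Finset.sum_le_sum fun i _ => Finset.sum_le_sum fun j _ => ?_)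
  rw [mul_diagonal, mul_pow]
  exact mul_le_of_le_one_right (sq_nonneg _) ((sq_le_one_iff_abs_le_one _).2 (he j))

/-- Pythagoras: `X Xᵀ = (X Q)(X Q)ᵀ + (X - X Q)(X - X Q)ᵀ` for an orthogonal projection `Q`. -/
lemma frob_mul_le_of_transpose_eq_of_mul_self_eq (X : Matrix m n ℝ) {Q : Matrix n n ℝ}
    (hQt : Qᵀ = Q) (hQQ : Q * Q = Q) : frob (X * Q) ≤ frob X := by
  have hXQQ : X * Q * Q = X * Q := by rw [Matrix.mul_assoc, hQQ]
  have hsplit : (X * Q) * (X * Q)ᵀ + (X - X * Q) * (X - X * Q)ᵀ = X * Xᵀ := by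
    simp only [transpose_mul, transpose_sub, hQt, Matrix.sub_mul, Matrix.mul_sub, hXQQ,
      ← Matrix.mul_assoc]
    abel
  have htrace := congrArg trace hsplit
  rw [trace_add, trace_mul_transpose_self, trace_mul_transpose_self,
    trace_mul_transpose_self] at htrace
  exact frob_le_frob_of_sum_sq_le (by linarith [sum_sq_entries_nonneg (X - X * Q)])

lemma IsMPInv.frob_mul_mul_le {A : Matrix p n ℝ} {P : Matrix n p ℝ} (hP : IsMPInv A P)
    (X : Matrix m p ℝ) : frob (X * A * P) ≤ frob X := by
  rw [Matrix.mul_assoc]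
  exact frob_mul_le_of_transpose_eq_of_mul_self_eq X hP.2.2.1 (by rw [← Matrix.mul_assoc, hP.1])

end Frobenius

theorem stmt19_general {m k p n : Type*} [Fintype m] [Fintype k] [Fintype p] [Fintype n]
    [DecidableEq (k ⊕ p)]
    (Wi : Matrix m n ℝ) (S : Matrix k n ℝ) (C : Matrix p n ℝ) (Sp : Matrix n k ℝ)
    (d : k ⊕ p → ℝ) (hd : ∀ i, 1 ≤ d i) (P : Matrix n (k ⊕ p) ℝ)
    (ε : ℝ)
    (hW : Wi * Sp * S = Wi)
    (hP : IsMPInv (Matrix.diagonal d * Matrix.fromRows S C) P) :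
    2 / ε ^ 2 * frob (Wi * P) ^ 2 ≤ 2 / ε ^ 2 * frob (Wi * Sp) ^ 2 := by
  set X := fromCols (Wi * Sp) (0 : Matrix m p ℝ) * diagonal d⁻¹
  have hXA : X * (diagonal d * fromRows S C) = Wi := by
    have hdd : (fun i => d⁻¹ i * d i) = fun _ => 1 :=
      funext fun i => inv_mul_cancel₀ (zero_lt_one.trans_le (hd i)).ne'
    rw [Matrix.mul_assoc, ← Matrix.mul_assoc (diagonal _), diagonal_mul_diagonal, hdd,
      diagonal_one, Matrix.one_mul, fromCols_mul_fromRows, Matrix.zero_mul, add_zero, hW]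
  have hle : frob (Wi * P) ≤ frob (Wi * Sp) := calc
    frob (Wi * P) = frob (X * (diagonal d * fromRows S C) * P) := by rw [hXA]
    _ ≤ frob X := hP.frob_mul_mul_le X
    _ ≤ frob (fromCols (Wi * Sp) (0 : Matrix m p ℝ)) :=
      frob_mul_diagonal_le _ fun i => by
        simpa [abs_inv, abs_of_pos (zero_lt_one.trans_le (hd i))] using inv_le_one_of_one_le₀ (hd i)
    _ = frob (Wi * Sp) := frob_fromCols_zero _
  gcongr
  exact frob_nonneg _

theorem stmt19 {m k p n : Type*} [Fintype m] [Fintype k] [Fintype p] [Fintype n]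
    [DecidableEq (k ⊕ p)]
    (Wi : Matrix m n ℝ) (S : Matrix k n ℝ) (C : Matrix p n ℝ) (Sp : Matrix n k ℝ)
    (d : k ⊕ p → ℝ) (hd : ∀ i, 1 ≤ d i) (P : Matrix n (k ⊕ p) ℝ)
    (ε : ℝ) (hε : ε ≠ 0)
    (hSp : IsMPInv S Sp) (hW : Wi * Sp * S = Wi)
    (hrank : S.rank = Fintype.card k)
    (hP : IsMPInv (Matrix.diagonal d * Matrix.fromRows S C) P) :
    2 / ε ^ 2 * frob (Wi * P) ^ 2 ≤ 2 / ε ^ 2 * frob (Wi * Sp) ^ 2 :=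
  stmt19_general Wi S C Sp d hd P ε hW hP
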